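/- arXiv:1403.1699 — 5 statements merged into one kernel-verified Lean document; each statement's English description precedes it below -/
import Mathlib

section
/- For every x ≥ 0, P(Z > x) ≤ 2 exp(−x²/8), where Z = sup_{t∈[0,1]}(Ŵ(t) − W(t)). In particular, for every γ ∈ (0,1), the (1−γ)-quantile q(γ) of Z satisfies q(γ) ≤ 2√(2 log(2/γ)). -/
open MeasureTheory ProbabilityTheory Set

noncomputable section

/-- Value at `t` of the least concave majorant of `G` restricted to `[a,b]`:
the pointwise infimum over all concave functions on `[a,b]` dominating `G` there. -/
def lcmaj (G : ℝ → ℝ) (a b t : ℝ) : ℝ :=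
  sInf {y : ℝ | ∃ h : ℝ → ℝ, ConcaveOn ℝ (Icc a b) h ∧
    (∀ x ∈ Icc a b, G x ≤ h x) ∧ y = h t}

/-- `sup_{t ∈ [a,b]} (Ĝ^{[a,b]}(t) − G(t))`. -/
def lcmGap (G : ℝ → ℝ) (a b : ℝ) : ℝ :=
  sSup ((fun t => lcmaj G a b t - G t) '' Icc a b)

/-- Standard Brownian motion on `[0,1]` started at `0`. -/
structure IsStandardBM {Ω : Type*} [MeasurableSpace Ω] (P : Measure Ω)
    (W : Ω → ℝ → ℝ) : Prop where
  meas : ∀ t, Measurable fun ω => W ω t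
  start : ∀ ω, W ω 0 = 0
  cont : ∀ ω, ContinuousOn (W ω) (Icc 0 1)
  gauss : ∀ s t : ℝ, 0 ≤ s → s ≤ t → t ≤ 1 →
    P.map (fun ω => W ω t - W ω s) = gaussianReal 0 (Real.toNNReal (t - s))
  indep : ∀ u : ℕ → ℝ, Monotone u → (∀ i, u i ∈ Icc (0:ℝ) 1) →
    iIndepFun (fun i ω => W ω (u (i + 1)) - W ω (u i)) P

/-- Observed process `F_n` in the white noise model. -/
def Fproc (f : ℝ → ℝ) (σ : ℝ) (n : ℕ) {Ω : Type*} (W : Ω → ℝ → ℝ) (ω : Ω) (t : ℝ) : ℝ :=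
  (∫ x in (0:ℝ)..t, f x) + σ / Real.sqrt n * W ω t

/-- Local test statistic `S_n^{[a,b]}`. -/
def Sstat (f : ℝ → ℝ) (σ : ℝ) (n : ℕ) {Ω : Type*} (W : Ω → ℝ → ℝ)
    (a b : ℝ) (ω : Ω) : ℝ :=
  Real.sqrt (n / (σ ^ 2 * (b - a))) * lcmGap (Fproc f σ n W ω) a b

/-- `Z = sup_{t ∈ [0,1]} (Ŵ(t) − W(t))`. -/
def Zvar {Ω : Type*} (W : Ω → ℝ → ℝ) (ω : Ω) : ℝ := lcmGap (W ω) 0 1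

/-- The `p`-th quantile of a measure on `ℝ`. -/
def mQuantile (μ : Measure ℝ) (p : ℝ) : ℝ :=
  sInf {x : ℝ | ENNReal.ofReal p ≤ μ (Iic x)}

/-- The `p`-th quantile of a real random variable. -/
def quantile {Ω : Type*} [MeasurableSpace Ω] (P : Measure Ω) (X : Ω → ℝ) (p : ℝ) : ℝ :=
  mQuantile (P.map X) p

/-- `max_{I ∈ 𝒞} S_n^I`, intervals being encoded as pairs of endpoints. -/
def maxStat (𝒞 : Finset (ℝ × ℝ)) (f : ℝ → ℝ) (σ : ℝ) (n : ℕ) {Ω : Type*}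
    (W : Ω → ℝ → ℝ) (ω : Ω) : ℝ :=
  sSup ((fun p : ℝ × ℝ => Sstat f σ n W p.1 p.2 ω) '' (𝒞 : Set (ℝ × ℝ)))

/-- `max_{I ∈ 𝒞} |I|^{-1/2} sup_{t ∈ I} (Ŵ^I(t) − W(t))`. -/
def maxNoise (𝒞 : Finset (ℝ × ℝ)) {Ω : Type*} (W : Ω → ℝ → ℝ) (ω : Ω) : ℝ :=
  sSup ((fun p : ℝ × ℝ => (Real.sqrt (p.2 - p.1))⁻¹ * lcmGap (W ω) p.1 p.2) '' (𝒞 : Set (ℝ × ℝ)))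

/-- The critical threshold `s_{α,n}`. -/
def salpha {Ω : Type*} [MeasurableSpace Ω] (P : Measure Ω) (𝒞 : Finset (ℝ × ℝ))
    (W : Ω → ℝ → ℝ) (α : ℝ) : ℝ :=
  quantile P (maxNoise 𝒞 W) (1 - α)

/-- The collection of all intervals `[i/n, j/n]`, `0 ≤ i < j ≤ n`. -/
def gridC (n : ℕ) : Finset (ℝ × ℝ) :=
  (((Finset.range (n + 1)) ×ˢ (Finset.range (n + 1))).filter (fun p => p.1 < p.2)).image
    (fun p => ((p.1 : ℝ) / n, (p.2 : ℝ) / n))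

/-- `f̄_{xy} = (y-x)⁻¹ ∫_x^y f`. -/
def fbar (f : ℝ → ℝ) (x y : ℝ) : ℝ := (y - x)⁻¹ * ∫ u in x..y, f u

/-- The Hölder class `F(s,R)` on `[0,1]`. -/
def holderClass (s R : ℝ) : Set (ℝ → ℝ) :=
  if s ≤ 1 then
    {f | ∀ u ∈ Icc (0:ℝ) 1, ∀ v ∈ Icc (0:ℝ) 1, |f u - f v| ≤ R * |u - v| ^ s}
  else
    {f | (∀ x ∈ Icc (0:ℝ) 1, DifferentiableAt ℝ f x) ∧
      ∀ u ∈ Icc (0:ℝ) 1, ∀ v ∈ Icc (0:ℝ) 1,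
        |deriv f u - deriv f v| ≤ R * |u - v| ^ (s - 1)}

/-- `Δ₁(f)`: sup-distance from `f` to the non-increasing functions on `[0,1]`. -/
def Delta1 (f : ℝ → ℝ) : ℝ :=
  sInf {d : ℝ | ∃ g : ℝ → ℝ, AntitoneOn g (Icc 0 1) ∧
    d = sSup ((fun t => |f t - g t|) '' Icc (0:ℝ) 1)}

/-- `Δ₂(f) = sup_{[0,1]} f'`. -/
def Delta2 (f : ℝ → ℝ) : ℝ :=
  sSup ((fun t => deriv f t) '' Icc (0:ℝ) 1)

/-- Uniform separation rate of a test with rejection probability `power f` under signal `f`,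
over the class `F`, with respect to criterion `Δ`, at power level `1 - β`. -/
def sepRate (power : (ℝ → ℝ) → ℝ) (F : Set (ℝ → ℝ)) (Δ : (ℝ → ℝ) → ℝ) (β : ℝ) : ℝ :=
  sInf {r : ℝ | 0 < r ∧ ∀ f ∈ F, r ≤ Δ f → 1 - β ≤ power f}

/-! Regression framework -/

/-- Piecewise linear interpolation on `[0,1]` of the values `v j` at the points `j/m`. -/
def plInterp (m : ℕ) (v : ℕ → ℝ) (t : ℝ) : ℝ :=
  v ⌊t * m⌋₊ + (t * m - ⌊t * m⌋₊) * (v (⌊t * m⌋₊ + 1) - v ⌊t * m⌋₊)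

/-- Cumulative sum diagram of the data `y 1, …, y m` with equal weights `1/m`. -/
def csd (m : ℕ) (y : ℕ → ℝ) : ℝ → ℝ :=
  plInterp m (fun j => (∑ i ∈ Finset.range j, y (i + 1)) / m)

/-- i.i.d. standard Gaussian noise. -/
def IsGaussNoise {Ω : Type*} [MeasurableSpace Ω] (P : Measure Ω) (ε : ℕ → Ω → ℝ) : Prop :=
  (∀ i, Measurable (ε i)) ∧ iIndepFun ε P ∧
    ∀ i, P.map (ε i) = gaussianReal 0 1

/-- Observations in the regression model: `Y_i = f(i/n) + σ ε_i`. -/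
def Yobs (f : ℝ → ℝ) (σ : ℝ) (n : ℕ) {Ω : Type*} (ε : ℕ → Ω → ℝ) (i : ℕ) (ω : Ω) : ℝ :=
  f ((i : ℝ) / n) + σ * ε i ω

/-- `Ȳ_i = (Y_{2i-1} + Y_{2i})/2`. -/
def Ybar (f : ℝ → ℝ) (σ : ℝ) (n : ℕ) {Ω : Type*} (ε : ℕ → Ω → ℝ) (i : ℕ) (ω : Ω) : ℝ :=
  (Yobs f σ n ε (2 * i - 1) ω + Yobs f σ n ε (2 * i) ω) / 2

/-- `ε̄_i = (ε_{2i-1} + ε_{2i})/√2`. -/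
def epsbar {Ω : Type*} (ε : ℕ → Ω → ℝ) (i : ℕ) (ω : Ω) : ℝ :=
  (ε (2 * i - 1) ω + ε (2 * i) ω) / Real.sqrt 2

/-- The variance estimator `σ̂² = (1/n) ∑ (Y_{2i} − Y_{2i-1})²`. -/
def hatSigmaSq (f : ℝ → ℝ) (σ : ℝ) (n : ℕ) {Ω : Type*} (ε : ℕ → Ω → ℝ) (ω : Ω) : ℝ :=
  (∑ i ∈ Finset.range (n / 2),
    (Yobs f σ n ε (2 * (i + 1)) ω - Yobs f σ n ε (2 * (i + 1) - 1) ω) ^ 2) / n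

/-- The local statistic `Ŝ_{n̄}^{reg,[a,b]}` in the regression model. -/
def SregStat (f : ℝ → ℝ) (σ : ℝ) (n : ℕ) {Ω : Type*} (ε : ℕ → Ω → ℝ)
    (a b : ℝ) (ω : Ω) : ℝ :=
  Real.sqrt ((n / 2 : ℕ) / ((hatSigmaSq f σ n ε ω / 2) * (b - a))) *
    lcmGap (csd (n / 2) (fun i => Ybar f σ n ε i ω)) a b

/-- `max_{I ∈ 𝒞} Ŝ_{n̄}^{reg,I}`. -/
def maxReg (𝒞 : Finset (ℝ × ℝ)) (f : ℝ → ℝ) (σ : ℝ) (n : ℕ) {Ω : Type*}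
    (ε : ℕ → Ω → ℝ) (ω : Ω) : ℝ :=
  sSup ((fun p : ℝ × ℝ => SregStat f σ n ε p.1 p.2 ω) '' (𝒞 : Set (ℝ × ℝ)))

/-- `Z_n^{reg} = max_{I ∈ 𝒞} √(n̄/|I|) sup_{t∈I} (Ĝ_{n̄}^I(t) − G_{n̄}(t))`. -/
def Zreg (𝒞 : Finset (ℝ × ℝ)) (n : ℕ) {Ω : Type*} (ε : ℕ → Ω → ℝ) (ω : Ω) : ℝ :=
  sSup ((fun p : ℝ × ℝ => Real.sqrt ((n / 2 : ℕ) / (p.2 - p.1)) *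
    lcmGap (csd (n / 2) (fun i => epsbar ε i ω)) p.1 p.2) '' (𝒞 : Set (ℝ × ℝ)))

/-- The critical threshold `r_{α,n}`: the `(1-α)`-quantile of `Z_n^{reg} / √(χ²(n̄)/n̄)`
with `χ²(n̄)` independent of `Z_n^{reg}`. -/
def ralpha {Ω : Type*} [MeasurableSpace Ω] (P : Measure Ω) (𝒞 : Finset (ℝ × ℝ)) (n : ℕ)
    (ε : ℕ → Ω → ℝ) (α : ℝ) : ℝ :=
  mQuantile (Measure.map (fun q : ℝ × ℝ => q.1 / Real.sqrt (q.2 / (n / 2 : ℕ)))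
    ((P.map (Zreg (𝒞 : Finset (ℝ × ℝ)) n ε)).prod
      (gammaMeasure ((n / 2 : ℕ) / 2 : ℝ) (1 / 2)))) (1 - α)



/-!
Since the constant `sup |W|` is a concave majorant of `W`, we have `Ŵ - W ≤ 2 sup |W|`,
so `{Z > x} ⊆ {sup |W| > x/2}`. By continuity, `{sup |W| > x/2}` is the increasing union of
the events that the maximum over the dyadic grid of mesh `2⁻ⁿ` exceeds `x/2`. Along a grid,
`W` is a Gaussian random walk; splitting according to the first passage time above `a` and
using the independence of increments gives the maximal Chernoff bound
`P(max_{i ≤ m} X_i > a) ≤ e^{-ta} E e^{t X_m}`, which is `e^{-a²/2}` for `t = a`; the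
factor `2` accounts for `-W`. The quantile bound is the tail bound at `x = 2 √(2 log (2/γ))`.
-/

open Filter Function Real Topology

lemma lcmaj_le_of_le {G : ℝ → ℝ} {a b t M : ℝ} (ht : t ∈ Icc a b)
    (hG : ∀ x ∈ Icc a b, G x ≤ M) : lcmaj G a b t ≤ M :=
  csInf_le ⟨G t, by rintro _ ⟨_, -, hGh, rfl⟩; exact hGh t ht⟩
    ⟨fun _ => M, concaveOn_const M (convex_Icc a b), hG, rfl⟩

lemma lcmGap_le_two_mul {G : ℝ → ℝ} {a b M : ℝ} (hab : a ≤ b)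
    (hG : ∀ t ∈ Icc a b, |G t| ≤ M) : lcmGap G a b ≤ 2 * M := by
  refine csSup_le ((nonempty_Icc.2 hab).image _) ?_
  rintro _ ⟨t, ht, rfl⟩
  have h₁ := lcmaj_le_of_le ht fun x hx => (le_abs_self _).trans (hG x hx)
  have h₂ := neg_le_of_abs_le (hG t ht)
  linarith

lemma exists_half_lt_abs_of_lt_lcmGap {G : ℝ → ℝ} {a b x : ℝ} (hab : a ≤ b)
    (hx : x < lcmGap G a b) : ∃ t ∈ Icc a b, x / 2 < |G t| := by
  by_contra! h
  linarith [lcmGap_le_two_mul hab h]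

def dyadicPoint (n k : ℕ) : ℝ := min ((k : ℝ) / 2 ^ n) 1

lemma dyadicPoint_mem_Icc (n k : ℕ) : dyadicPoint n k ∈ Icc (0 : ℝ) 1 :=
  ⟨le_min (by positivity) zero_le_one, min_le_right _ _⟩

lemma monotone_dyadicPoint (n : ℕ) : Monotone (dyadicPoint n) := fun _ _ h =>
  min_le_min_right _ (div_le_div_of_nonneg_right (Nat.cast_le.2 h) (by positivity))

@[simp]
lemma dyadicPoint_zero (n : ℕ) : dyadicPoint n 0 = 0 := by simp [dyadicPoint]

lemma dyadicPoint_succ_two_mul (n k : ℕ) : dyadicPoint (n + 1) (2 * k) = dyadicPoint n k := by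
  rw [dyadicPoint, dyadicPoint, pow_succ]
  push_cast
  rw [mul_comm (2 : ℝ), mul_div_mul_right _ _ two_ne_zero]

lemma tendsto_dyadicPoint_floor {t : ℝ} (ht : t ∈ Icc (0 : ℝ) 1) :
    Tendsto (fun n => dyadicPoint n ⌊t * 2 ^ n⌋₊) atTop (𝓝 t) := by
  have hle : ∀ n : ℕ, (⌊t * 2 ^ n⌋₊ : ℝ) / 2 ^ n ≤ t := fun n =>
    div_le_of_le_mul₀ (by positivity) ht.1 (Nat.floor_le (mul_nonneg ht.1 (by positivity)))
  have hge : ∀ n : ℕ, t - (1 / 2) ^ n ≤ (⌊t * 2 ^ n⌋₊ : ℝ) / 2 ^ n := fun n => by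
    rw [one_div_pow, sub_le_iff_le_add, ← add_div, le_div_iff₀ (by positivity)]
    linarith [Nat.lt_floor_add_one (t * 2 ^ n)]
  have hlow : Tendsto (fun n : ℕ => t - (1 / 2 : ℝ) ^ n) atTop (𝓝 t) := by
    simpa using tendsto_const_nhds.sub (tendsto_pow_atTop_nhds_zero_of_lt_one (by norm_num)
      (by norm_num : (1 / 2 : ℝ) < 1))
  have heq : ∀ n : ℕ, dyadicPoint n ⌊t * 2 ^ n⌋₊ = (⌊t * 2 ^ n⌋₊ : ℝ) / 2 ^ n :=
    fun n => min_eq_left ((hle n).trans ht.2)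
  simp_rw [heq]
  exact tendsto_of_tendsto_of_tendsto_of_le_of_le hlow tendsto_const_nhds hge hle

lemma exists_dyadicPoint_lt {f : ℝ → ℝ} (hf : ContinuousOn f (Icc 0 1)) {t x : ℝ}
    (ht : t ∈ Icc (0 : ℝ) 1) (hx : x < f t) :
    ∃ n, ∃ k ≤ 2 ^ n, x < f (dyadicPoint n k) := by
  have hlim : Tendsto (fun n => f (dyadicPoint n ⌊t * 2 ^ n⌋₊)) atTop (𝓝 (f t)) :=
    (hf t ht).tendsto.comp (tendsto_nhdsWithin_iff.2
      ⟨tendsto_dyadicPoint_floor ht, Eventually.of_forall fun n => dyadicPoint_mem_Icc n _⟩)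
  obtain ⟨n, hn⟩ := (hlim.eventually (lt_mem_nhds hx)).exists
  refine ⟨n, ⌊t * 2 ^ n⌋₊, Nat.floor_le_of_le ?_, hn⟩
  exact_mod_cast mul_le_of_le_one_left (by positivity) ht.2

lemma mQuantile_le_of_measure_Ioi_le {μ : Measure ℝ} [IsProbabilityMeasure μ] {γ r : ℝ}
    (hγ₀ : 0 ≤ γ) (hγ₁ : γ < 1) (h : μ (Ioi r) ≤ ENNReal.ofReal γ) :
    mQuantile μ (1 - γ) ≤ r := by
  have hbdd : BddBelow {x : ℝ | ENNReal.ofReal (1 - γ) ≤ μ (Iic x)} := by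
    obtain ⟨c, hc⟩ := eventually_atBot.1
      ((tendsto_cdf_atBot (μ := μ)).eventually (gt_mem_nhds (sub_pos.2 hγ₁)))
    refine ⟨c, fun x hx => le_of_not_gt fun hxc => ?_⟩
    rw [mem_ofPred_eq, ← ofReal_cdf, ENNReal.ofReal_le_ofReal_iff (cdf_nonneg _ _)] at hx
    linarith [hc x hxc.le]
  refine csInf_le hbdd ?_
  calc ENNReal.ofReal (1 - γ) = 1 - ENNReal.ofReal γ := by
        rw [ENNReal.ofReal_sub _ hγ₀, ENNReal.ofReal_one]
    _ ≤ 1 - μ (Ioi r) := tsub_le_tsub_left h 1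
    _ = μ (Iic r) := by rw [← prob_compl_eq_one_sub measurableSet_Ioi, compl_Ioi]

lemma quantile_le_of_measure_lt_le {Ω : Type*} [MeasurableSpace Ω] {P : Measure Ω}
    [IsProbabilityMeasure P] {X : Ω → ℝ} {γ r : ℝ} (hγ₀ : 0 ≤ γ) (hγ₁ : γ < 1)
    (hr : 0 ≤ r) (h : P {ω | r < X ω} ≤ ENNReal.ofReal γ) : quantile P X (1 - γ) ≤ r := by
  by_cases hX : AEMeasurable X P
  · have := Measure.isProbabilityMeasure_map hX
    refine mQuantile_le_of_measure_Ioi_le hγ₀ hγ₁ ?_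
    rwa [Measure.map_apply_of_aemeasurable hX measurableSet_Ioi]
  · -- junk value: `P.map X = 0`, so the defining set is empty and its infimum is `0`
    have hempty : {x : ℝ | ENNReal.ofReal (1 - γ) ≤ (0 : Measure ℝ) (Iic x)} = ∅ :=
      eq_empty_of_forall_notMem fun x hx => by simp at hx; linarith
    rw [quantile, Measure.map_of_not_aemeasurable hX, mQuantile, hempty, Real.sInf_empty]
    exact hr

def firstPassage (a : ℝ) (i : ℕ) : Set (ℕ → ℝ) := {x | a < x i ∧ ∀ j < i, x j ≤ a}

lemma measurableSet_firstPassage (a : ℝ) (i : ℕ) : MeasurableSet (firstPassage a i) := by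
  simp only [firstPassage, ofPred_and, ofPred_forall]
  exact (measurableSet_lt measurable_const (measurable_pi_apply i)).inter <|
    .iInter fun j => .iInter fun _ => measurableSet_le (measurable_pi_apply j) measurable_const

lemma pairwise_disjoint_firstPassage (a : ℝ) : Pairwise (Disjoint on (firstPassage a)) := by
  suffices ∀ i j, i < j → Disjoint (firstPassage a i) (firstPassage a j) from
    fun i j hij => hij.lt_or_gt.elim (this i j) fun h => (this j i h).symm
  exact fun i j hij => disjoint_left.2 fun x hi hj => (hj.2 i hij).not_gt hi.1

lemma comp_min_mem_firstPassage_iff {x : ℕ → ℝ} {a : ℝ} {i : ℕ} :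
    (fun k => x (min k i)) ∈ firstPassage a i ↔ x ∈ firstPassage a i := by
  simp only [firstPassage, mem_ofPred_eq, min_self]
  exact and_congr_right' (forall₂_congr fun j hj => by rw [min_eq_left hj.le])

lemma biUnion_firstPassage (a : ℝ) (m : ℕ) :
    ⋃ i ∈ Finset.range (m + 1), firstPassage a i = {x | ∃ i ≤ m, a < x i} := by
  ext x
  simp only [mem_iUnion, Finset.mem_range, Nat.lt_succ_iff, exists_prop, mem_ofPred_eq]
  refine ⟨fun ⟨i, hi, hx⟩ => ⟨i, hi, hx.1⟩, fun ⟨i, hi, hx⟩ => ?_⟩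
  classical
  have hex : ∃ k, a < x k := ⟨i, hx⟩
  exact ⟨Nat.find hex, (Nat.find_le hx).trans hi, Nat.find_spec hex,
    fun j hj => not_lt.1 (Nat.find_min hex hj)⟩

section RandomWalk

variable {Ω : Type*} [MeasurableSpace Ω] {P : Measure Ω} {X : ℕ → Ω → ℝ}

lemma indepFun_sub_stopped (hX : ∀ i, Measurable (X i)) (hX₀ : ∀ ω, X 0 ω = 0)
    (hind : iIndepFun (fun i ω => X (i + 1) ω - X i ω) P) {i m : ℕ} (him : i ≤ m) :
    IndepFun (fun ω => X m ω - X i ω) (fun ω k => X (min k i) ω) P := by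
  have hsum : ∀ k ω, X k ω = ∑ j ∈ Finset.range k, (X (j + 1) ω - X j ω) := fun k ω => by
    rw [Finset.sum_range_sub (fun j => X j ω), hX₀, sub_zero]
  have hdisj : Disjoint (Finset.Ico i m) (Finset.range i) :=
    Finset.disjoint_left.2 fun j hj hj' => by simp at hj hj'; omega
  have hmeas : Measurable fun (y : Finset.range i → ℝ) (k : ℕ) =>
      ∑ j : Finset.range i, if (j : ℕ) < k then y j else 0 :=
    measurable_pi_lambda _ fun k => Finset.measurable_sum _ fun j _ =>
      by split_ifs <;> fun_prop
  convert (hind.indepFun_finset _ _ hdisj fun j => (hX _).sub (hX j)).comp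
    (Finset.measurable_sum Finset.univ fun j _ => measurable_pi_apply j) hmeas using 1
  · ext ω
    simp only [comp_apply]
    rw [Finset.sum_coe_sort (Finset.Ico i m) fun j => X (j + 1) ω - X j ω,
      Finset.sum_Ico_eq_sub _ him, ← hsum, ← hsum]
  · ext ω k
    simp only [comp_apply]
    rw [Finset.sum_coe_sort (Finset.range i) fun j => if j < k then X (j + 1) ω - X j ω else 0,
      ← Finset.sum_filter, hsum]
    congr 1
    ext j
    simp only [Finset.mem_filter, Finset.mem_range]
    omega

lemma indepFun_exp_sub_indicator_firstPassage (hX : ∀ i, Measurable (X i))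
    (hX₀ : ∀ ω, X 0 ω = 0) (hind : iIndepFun (fun i ω => X (i + 1) ω - X i ω) P)
    (t a : ℝ) {i m : ℕ} (him : i ≤ m) :
    IndepFun (fun ω => rexp (t * (X m ω - X i ω)))
      ({ω | (fun k => X k ω) ∈ firstPassage a i}.indicator fun ω => rexp (t * X i ω)) P := by
  -- on the event, `exp (t X_i)` is a function of the path stopped at `i`
  have hstopped :
      ({ω | (fun k => X k ω) ∈ firstPassage a i}.indicator fun ω => rexp (t * X i ω)) =
      (firstPassage a i).indicator (fun x => rexp (t * x i)) ∘ fun ω k => X (min k i) ω := by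
    ext ω
    have hstop : (fun k => X (min k i) ω) ∈ firstPassage a i ↔
        ω ∈ {ω | (fun k => X k ω) ∈ firstPassage a i} :=
      comp_min_mem_firstPassage_iff (x := fun k => X k ω)
    by_cases hω : ω ∈ {ω | (fun k => X k ω) ∈ firstPassage a i}
    · rw [comp_apply, indicator_of_mem hω, indicator_of_mem (hstop.2 hω)]
      simp only [min_self]
    · rw [comp_apply, indicator_of_notMem hω, indicator_of_notMem (mt hstop.1 hω)]
  rw [hstopped]
  exact (indepFun_sub_stopped hX hX₀ hind him).comp (measurable_id.const_mul t).exp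
    (Measurable.indicator (by fun_prop) (measurableSet_firstPassage a i))

variable [IsProbabilityMeasure P]

lemma integrable_exp_mul_of_map_eq_gaussianReal {Y : Ω → ℝ} {μ : ℝ} {v : NNReal}
    (hY : P.map Y = gaussianReal μ v) (t : ℝ) : Integrable (fun ω => rexp (t * Y ω)) P :=
  mgf_pos_iff.1 (by rw [mgf_gaussianReal hY]; positivity)

variable (hX : ∀ i, Measurable (X i)) (hX₀ : ∀ ω, X 0 ω = 0)
  (hind : iIndepFun (fun i ω => X (i + 1) ω - X i ω) P)
  (hgauss : ∀ i j, i ≤ j → ∃ v, P.map (fun ω => X j ω - X i ω) = gaussianReal 0 v)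
include hX hX₀ hind hgauss

lemma exp_mul_measureReal_firstPassage_le {t : ℝ} (ht : 0 ≤ t) (a : ℝ) {i m : ℕ}
    (him : i ≤ m) :
    rexp (t * a) * P.real {ω | (fun k => X k ω) ∈ firstPassage a i} ≤
      ∫ ω in {ω | (fun k => X k ω) ∈ firstPassage a i}, rexp (t * X m ω) ∂P := by
  set A := {ω | (fun k => X k ω) ∈ firstPassage a i}
  have hA : MeasurableSet A := measurable_pi_lambda _ hX (measurableSet_firstPassage a i)
  set g := A.indicator fun ω => rexp (t * X i ω) with hg
  have hindep := indepFun_exp_sub_indicator_firstPassage hX hX₀ hind t a him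
  obtain ⟨v, hv⟩ := hgauss i m him
  obtain ⟨w, hw⟩ := hgauss 0 i (Nat.zero_le i)
  simp only [hX₀, sub_zero] at hw
  have hone : 1 ≤ ∫ ω, rexp (t * (X m ω - X i ω)) ∂P := by
    rw [← mgf, mgf_gaussianReal hv]
    exact one_le_exp (by positivity)
  have hgint : 0 ≤ ∫ ω, g ω ∂P :=
    integral_nonneg fun ω => indicator_nonneg (fun _ _ => (exp_pos _).le) _
  calc rexp (t * a) * P.real A = ∫ _ in A, rexp (t * a) ∂P := by
        rw [setIntegral_const, smul_eq_mul, mul_comm]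
    _ ≤ ∫ ω in A, rexp (t * X i ω) ∂P :=
        setIntegral_mono_on integrableOn_const
          (integrable_exp_mul_of_map_eq_gaussianReal hw t).integrableOn hA
          fun ω hω => exp_le_exp.2 (mul_le_mul_of_nonneg_left hω.1.le ht)
    _ = ∫ ω, g ω ∂P := (integral_indicator hA).symm
    _ ≤ (∫ ω, rexp (t * (X m ω - X i ω)) ∂P) * ∫ ω, g ω ∂P :=
        le_mul_of_one_le_left hgint hone
    _ = ∫ ω, rexp (t * (X m ω - X i ω)) * g ω ∂P :=
        (hindep.integral_fun_mul_eq_mul_integral (by fun_prop)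
          (((hX i).const_mul t).exp.indicator hA).aestronglyMeasurable).symm
    _ = ∫ ω in A, rexp (t * X m ω) ∂P := by
        rw [← integral_indicator hA]
        congr 1 with ω
        by_cases hω : ω ∈ A
        · rw [hg, indicator_of_mem hω, indicator_of_mem hω, ← exp_add]
          ring_nf
        · rw [hg, indicator_of_notMem hω, indicator_of_notMem hω, mul_zero]

theorem measureReal_exists_lt_le_exp_mul_mgf {t : ℝ} (ht : 0 ≤ t) (a : ℝ) (m : ℕ) :
    P.real {ω | ∃ i ≤ m, a < X i ω} ≤ rexp (-t * a) * mgf (X m) P t := by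
  set A : ℕ → Set Ω := fun i => {ω | (fun k => X k ω) ∈ firstPassage a i}
  have hA : ∀ i, MeasurableSet (A i) := fun i =>
    measurable_pi_lambda _ hX (measurableSet_firstPassage a i)
  have hdisj : Pairwise (Disjoint on A) := fun i j hij =>
    (pairwise_disjoint_firstPassage a hij).preimage _
  have hunion : {ω | ∃ i ≤ m, a < X i ω} = ⋃ i ∈ Finset.range (m + 1), A i := by
    rw [show {ω | ∃ i ≤ m, a < X i ω} = (fun ω k => X k ω) ⁻¹' {x | ∃ i ≤ m, a < x i}
      from rfl, ← biUnion_firstPassage, preimage_iUnion₂]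
    rfl
  obtain ⟨v, hv⟩ := hgauss 0 m (Nat.zero_le m)
  simp only [hX₀, sub_zero] at hv
  have hint := integrable_exp_mul_of_map_eq_gaussianReal hv t
  rw [neg_mul, exp_neg, ← div_eq_inv_mul, le_div_iff₀' (exp_pos _), hunion,
    measureReal_biUnion_finset (hdisj.set_pairwise _) fun i _ => hA i, Finset.mul_sum]
  calc ∑ i ∈ Finset.range (m + 1), rexp (t * a) * P.real (A i)
      ≤ ∑ i ∈ Finset.range (m + 1), ∫ ω in A i, rexp (t * X m ω) ∂P :=
        Finset.sum_le_sum fun i hi => exp_mul_measureReal_firstPassage_le hX hX₀ hind hgauss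
          ht a (Nat.lt_succ_iff.1 (Finset.mem_range.1 hi))
    _ = ∫ ω in ⋃ i ∈ Finset.range (m + 1), A i, rexp (t * X m ω) ∂P :=
        (integral_biUnion_finset _ (fun i _ => hA i) (hdisj.set_pairwise _)
          fun _ _ => hint.integrableOn).symm
    _ ≤ mgf (X m) P t :=
        setIntegral_le_integral hint (Eventually.of_forall fun _ => (exp_pos _).le)

end RandomWalk

section BrownianMotion

variable {Ω : Type*} [MeasurableSpace Ω] {P : Measure Ω} {W : Ω → ℝ → ℝ}

lemma IsStandardBM.neg (hW : IsStandardBM P W) : IsStandardBM P fun ω t => -W ω t where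
  meas t := (hW.meas t).neg
  start ω := by simp [hW.start ω]
  cont ω := (hW.cont ω).neg
  gauss s t hs hst ht := by
    have : (fun ω => -W ω t - -W ω s) = (fun x => -x) ∘ fun ω => W ω t - W ω s := by
      ext; simp only [comp_apply]; ring
    rw [this, ← Measure.map_map (g := fun x : ℝ => -x) (f := fun ω => W ω t - W ω s)
      measurable_neg ((hW.meas t).sub (hW.meas s)),
      hW.gauss s t hs hst ht, gaussianReal_map_neg, neg_zero]
  indep u hu hmem := by
    convert (hW.indep u hu hmem).comp (fun _ x => -x) fun _ => measurable_neg using 2 with i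
    ext ω
    simp only [comp_apply]
    ring

variable [IsProbabilityMeasure P]

lemma IsStandardBM.measureReal_exists_dyadicPoint_lt_le (hW : IsStandardBM P W) {a : ℝ}
    (ha : 0 ≤ a) (n : ℕ) :
    P.real {ω | ∃ k ≤ 2 ^ n, a < W ω (dyadicPoint n k)} ≤ rexp (-a ^ 2 / 2) := by
  have hgauss : ∀ i j, i ≤ j →
      P.map (fun ω => W ω (dyadicPoint n j) - W ω (dyadicPoint n i)) =
        gaussianReal 0 (dyadicPoint n j - dyadicPoint n i).toNNReal := fun i j hij =>
    hW.gauss _ _ (dyadicPoint_mem_Icc n i).1 (monotone_dyadicPoint n hij)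
      (dyadicPoint_mem_Icc n j).2
  have hmax := measureReal_exists_lt_le_exp_mul_mgf (X := fun k ω => W ω (dyadicPoint n k))
    (fun k => hW.meas _) (fun ω => by simp [hW.start]) (hW.indep _ (monotone_dyadicPoint n)
      (dyadicPoint_mem_Icc n)) (fun i j hij => ⟨_, hgauss i j hij⟩) ha a (2 ^ n)
  have hv := hgauss 0 (2 ^ n) (Nat.zero_le _)
  simp only [dyadicPoint_zero, hW.start, sub_zero] at hv
  rw [mgf_gaussianReal hv, ← exp_add] at hmax
  refine hmax.trans (exp_le_exp.2 ?_)
  have hv₁ : ((dyadicPoint n (2 ^ n)).toNNReal : ℝ) ≤ 1 := by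
    rw [coe_toNNReal _ (dyadicPoint_mem_Icc n _).1]
    exact (dyadicPoint_mem_Icc n _).2
  nlinarith [mul_nonneg (sub_nonneg.2 hv₁) (sq_nonneg a)]

lemma IsStandardBM.measureReal_exists_dyadicPoint_lt_abs_le (hW : IsStandardBM P W) {a : ℝ}
    (ha : 0 ≤ a) (n : ℕ) :
    P.real {ω | ∃ k ≤ 2 ^ n, a < |W ω (dyadicPoint n k)|} ≤ 2 * rexp (-a ^ 2 / 2) := by
  have hsub : {ω | ∃ k ≤ 2 ^ n, a < |W ω (dyadicPoint n k)|} ⊆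
      {ω | ∃ k ≤ 2 ^ n, a < W ω (dyadicPoint n k)} ∪
        {ω | ∃ k ≤ 2 ^ n, a < -W ω (dyadicPoint n k)} := by
    rintro ω ⟨k, hk, h⟩
    rcases lt_abs.1 h with h | h
    exacts [Or.inl ⟨k, hk, h⟩, Or.inr ⟨k, hk, h⟩]
  calc _ ≤ P.real (_ ∪ _) := measureReal_mono hsub
    _ ≤ _ + _ := measureReal_union_le _ _
    _ ≤ rexp (-a ^ 2 / 2) + rexp (-a ^ 2 / 2) :=
        add_le_add (hW.measureReal_exists_dyadicPoint_lt_le ha n)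
          (hW.neg.measureReal_exists_dyadicPoint_lt_le ha n)
    _ = 2 * rexp (-a ^ 2 / 2) := by ring

lemma IsStandardBM.measure_exists_lt_abs_le (hW : IsStandardBM P W) {a : ℝ} (ha : 0 ≤ a) :
    P {ω | ∃ t ∈ Icc (0 : ℝ) 1, a < |W ω t|} ≤
      ENNReal.ofReal (2 * rexp (-a ^ 2 / 2)) := by
  set B : ℕ → Set Ω := fun n => {ω | ∃ k ≤ 2 ^ n, a < |W ω (dyadicPoint n k)|}
  have hB : Monotone B := monotone_nat_of_le_succ fun n ω ⟨k, hk, h⟩ =>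
    ⟨2 * k, by rw [pow_succ]; omega, by rwa [dyadicPoint_succ_two_mul]⟩
  have hsub : {ω | ∃ t ∈ Icc (0 : ℝ) 1, a < |W ω t|} ⊆ ⋃ n, B n :=
    fun ω ⟨t, ht, h⟩ => mem_iUnion.2 (exists_dyadicPoint_lt (hW.cont ω).abs ht h)
  calc _ ≤ P (⋃ n, B n) := measure_mono hsub
    _ = ⨆ n, P (B n) := hB.measure_iUnion
    _ ≤ _ := iSup_le fun n => (ENNReal.le_ofReal_iff_toReal_le (measure_ne_top _ _)
        (by positivity)).2 (hW.measureReal_exists_dyadicPoint_lt_abs_le ha n)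

lemma IsStandardBM.measure_lt_Zvar_le (hW : IsStandardBM P W) {x : ℝ} (hx : 0 ≤ x) :
    P {ω | x < Zvar W ω} ≤ ENNReal.ofReal (2 * rexp (-x ^ 2 / 8)) :=
  calc P {ω | x < Zvar W ω} ≤ P {ω | ∃ t ∈ Icc (0 : ℝ) 1, x / 2 < |W ω t|} :=
        measure_mono fun _ hω => exists_half_lt_abs_of_lt_lcmGap zero_le_one hω
    _ ≤ ENNReal.ofReal (2 * rexp (-(x / 2) ^ 2 / 2)) :=
        hW.measure_exists_lt_abs_le (by positivity)
    _ = ENNReal.ofReal (2 * rexp (-x ^ 2 / 8)) := by ring_nf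

end BrownianMotion

theorem statement_4 {Ω : Type*} [MeasurableSpace Ω] (P : Measure Ω) [IsProbabilityMeasure P]
    (W : Ω → ℝ → ℝ) (hW : IsStandardBM P W) :
    (∀ x : ℝ, 0 ≤ x → (P {ω | x < Zvar W ω}).toReal ≤ 2 * Real.exp (-x ^ 2 / 8)) ∧
    ∀ γ ∈ Ioo (0:ℝ) 1,
      quantile P (Zvar W) (1 - γ) ≤ 2 * Real.sqrt (2 * Real.log (2 / γ)) := by
  refine ⟨fun x hx => ENNReal.toReal_le_of_le_ofReal (by positivity) (hW.measure_lt_Zvar_le hx),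
    fun γ ⟨hγ₀, hγ₁⟩ => ?_⟩
  have hlog : 0 ≤ Real.log (2 / γ) := Real.log_nonneg (by rw [le_div_iff₀ hγ₀]; linarith)
  have hr : 0 ≤ 2 * Real.sqrt (2 * Real.log (2 / γ)) := by positivity
  refine quantile_le_of_measure_lt_le hγ₀.le hγ₁ hr ((hW.measure_lt_Zvar_le hr).trans_eq ?_)
  rw [mul_pow, Real.sq_sqrt (by positivity), show -(2 ^ 2 * (2 * Real.log (2 / γ))) / 8 =
    -Real.log (2 / γ) by ring, Real.exp_neg, Real.exp_log (by positivity)]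
  congr 1
  field_simp

end
end

section
/- Let R > 0 and s ∈ (0,1], and let f : [0,1] → ℝ be integrable with f(u) − f(v) ≤ R(u−v)^s for all 0 ≤ v ≤ u ≤ 1. Let x₀ < y₀ in [0,1] be such that ρ := f(y₀) − f(x₀) > 0. Then there exist a constant C(s) > 0 depending only on s and an interval [x,y] ⊆ [x₀,y₀] with x < y such that sup_{t∈[x,y]} ((t−x)/√(y−x)) (f̄_{xy} − f̄_{xt}) ≥ C(s) R^{−1/(2s)} ρ^{1+1/(2s)}. -/
/-!
Let `g(w)` be the difference between the averages of `f` over the last and the first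
subintervals of width `w` of `[x₀, y₀]`. Then `g(y₀ - x₀) = 0`, while one-sided Hölder
continuity forces `g(w) ≥ 3ρ/4` as soon as `R w^s ≤ ρ/8`. Halving `w` changes `g` by the mean of
two differences of adjacent half-window averages, and on a window `[x, y]` such a difference is
at most `4 windowSup f x y / √(y - x)` (take `t` the midpoint). So if every window statistic
were below `T`, summing over dyadic widths would give `√w · g(w) ≤ 12 T` for all
`w = (y₀ - x₀) / 2^k`, which contradicts `g(w) ≥ 3ρ/4` at the dyadic width `w ≍ (ρ/R)^{1/s}`.
-/

open MeasureTheory ProbabilityTheory Set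

noncomputable section

theorem sub_mul_fbar (f : ℝ → ℝ) (x y : ℝ) : (y - x) * fbar f x y = ∫ u in x..y, f u := by
  rcases eq_or_ne x y with rfl | hxy
  · simp
  · rw [fbar, ← mul_assoc, mul_inv_cancel₀ (sub_ne_zero.2 hxy.symm), one_mul]

section Averages

variable {f : ℝ → ℝ} {a b x y : ℝ}

theorem MeasureTheory.IntegrableOn.intervalIntegrable_of_le (hf : IntegrableOn f (Icc a b))
    {u v : ℝ} (hau : a ≤ u) (huv : u ≤ v) (hvb : v ≤ b) : IntervalIntegrable f volume u v :=
  (intervalIntegrable_iff_integrableOn_Icc_of_le huv).2 (hf.mono_set (Icc_subset_Icc hau hvb))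

theorem fbar_midpoint (hxy : x < y) (hf : IntegrableOn f (Icc x y)) :
    fbar f x y = (fbar f x ((x + y) / 2) + fbar f ((x + y) / 2) y) / 2 := by
  have hsplit := intervalIntegral.integral_add_adjacent_intervals (b := (x + y) / 2)
    (hf.intervalIntegrable_of_le le_rfl (by linarith) (by linarith))
    (hf.intervalIntegrable_of_le (by linarith) (by linarith) le_rfl)
  rw [← sub_mul_fbar, ← sub_mul_fbar, ← sub_mul_fbar] at hsplit
  apply mul_left_cancel₀ (sub_ne_zero.2 hxy.ne')
  linear_combination -hsplit

theorem le_fbar_of_forall_le {c : ℝ} (hxy : x < y) (hf : IntegrableOn f (Icc x y))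
    (h : ∀ u ∈ Icc x y, c ≤ f u) : c ≤ fbar f x y := by
  have hint := intervalIntegral.integral_mono_on hxy.le intervalIntegrable_const
    (hf.intervalIntegrable_of_le le_rfl hxy.le le_rfl) h
  rw [intervalIntegral.integral_const, smul_eq_mul, ← sub_mul_fbar] at hint
  exact le_of_mul_le_mul_left (by linarith) (sub_pos.2 hxy)

theorem fbar_le_of_forall_le {c : ℝ} (hxy : x < y) (hf : IntegrableOn f (Icc x y))
    (h : ∀ u ∈ Icc x y, f u ≤ c) : fbar f x y ≤ c := by
  have hint := intervalIntegral.integral_mono_on hxy.le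
    (hf.intervalIntegrable_of_le le_rfl hxy.le le_rfl) intervalIntegrable_const h
  rw [intervalIntegral.integral_const, smul_eq_mul, ← sub_mul_fbar] at hint
  exact le_of_mul_le_mul_left (by linarith) (sub_pos.2 hxy)

end Averages

def windowSup (f : ℝ → ℝ) (x y : ℝ) : ℝ :=
  sSup ((fun t => (t - x) / Real.sqrt (y - x) * (fbar f x y - fbar f x t)) '' Icc x y)

section WindowSup

variable {f : ℝ → ℝ} {x y : ℝ}

theorem bddAbove_windowSup_image (hxy : x ≤ y) (hf : IntegrableOn f (Icc x y)) :
    BddAbove ((fun t => (t - x) / Real.sqrt (y - x) * (fbar f x y - fbar f x t)) '' Icc x y) := by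
  have hprimitive : (fun t => (t - x) / Real.sqrt (y - x) * (fbar f x y - fbar f x t)) =
      fun t => ((t - x) * fbar f x y - ∫ u in x..t, f u) / Real.sqrt (y - x) := by
    funext t
    rw [← sub_mul_fbar]
    ring
  rw [hprimitive]
  refine isCompact_Icc.bddAbove_image (ContinuousOn.div_const ?_ _)
  rw [← uIcc_of_le hxy] at hf ⊢
  exact (continuousOn_id.sub continuousOn_const).mul continuousOn_const |>.sub
    (intervalIntegral.continuousOn_primitive_interval hf)

theorem sqrt_mul_fbar_midpoint_sub_le (hxy : x < y) (hf : IntegrableOn f (Icc x y)) :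
    Real.sqrt (y - x) * (fbar f ((x + y) / 2) y - fbar f x ((x + y) / 2)) ≤
      4 * windowSup f x y := by
  have hmid := le_csSup (bddAbove_windowSup_image hxy.le hf)
    (mem_image_of_mem _ (show (x + y) / 2 ∈ Icc x y from ⟨by linarith, by linarith⟩))
  have hsqrt : 0 < Real.sqrt (y - x) := Real.sqrt_pos.2 (sub_pos.2 hxy)
  have hsq : Real.sqrt (y - x) ^ 2 = y - x := Real.sq_sqrt (sub_pos.2 hxy).le
  have hval : ((x + y) / 2 - x) / Real.sqrt (y - x) * (fbar f x y - fbar f x ((x + y) / 2)) =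
      Real.sqrt (y - x) * (fbar f ((x + y) / 2) y - fbar f x ((x + y) / 2)) / 4 := by
    rw [fbar_midpoint hxy hf]
    field_simp
    rw [hsq]
    ring
  rw [windowSup]
  linarith [hval ▸ hmid]

end WindowSup

def endGap (f : ℝ → ℝ) (a b w : ℝ) : ℝ := fbar f (b - w) b - fbar f a (a + w)

section Dyadic

variable {f : ℝ → ℝ} {a b c : ℝ}

theorem sqrt_two_mul_mul_endGap_sub_le {ℓ : ℝ} (hℓ : 0 < ℓ) (h2ℓ : 2 * ℓ ≤ b - a)
    (hf : IntegrableOn f (Icc a b))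
    (hD : ∀ x y, a ≤ x → x < y → y ≤ b →
      Real.sqrt (y - x) * (fbar f ((x + y) / 2) y - fbar f x ((x + y) / 2)) ≤ c) :
    Real.sqrt (2 * ℓ) * (endGap f a b ℓ - endGap f a b (2 * ℓ)) ≤ c := by
  have hR := hD (b - 2 * ℓ) b (by linarith) (by linarith) le_rfl
  have hL := hD a (a + 2 * ℓ) le_rfl (by linarith) (by linarith)
  have hmR := fbar_midpoint (x := b - 2 * ℓ) (y := b) (by linarith)
    (hf.mono_set (Icc_subset_Icc (by linarith) le_rfl))
  have hmL := fbar_midpoint (x := a) (y := a + 2 * ℓ) (by linarith)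
    (hf.mono_set (Icc_subset_Icc le_rfl (by linarith)))
  rw [show (b - 2 * ℓ + b) / 2 = b - ℓ by ring, show b - (b - 2 * ℓ) = 2 * ℓ by ring] at hR
  rw [show (b - 2 * ℓ + b) / 2 = b - ℓ by ring] at hmR
  rw [show (a + (a + 2 * ℓ)) / 2 = a + ℓ by ring, show a + 2 * ℓ - a = 2 * ℓ by ring] at hL
  rw [show (a + (a + 2 * ℓ)) / 2 = a + ℓ by ring] at hmL
  rw [endGap, endGap, hmR, hmL]
  linear_combination (hR + hL) / 2

theorem sqrt_mul_endGap_dyadic_le (hab : a < b) (hf : IntegrableOn f (Icc a b)) (hc : 0 ≤ c)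
    (hD : ∀ x y, a ≤ x → x < y → y ≤ b →
      Real.sqrt (y - x) * (fbar f ((x + y) / 2) y - fbar f x ((x + y) / 2)) ≤ c) (k : ℕ) :
    Real.sqrt ((b - a) / 2 ^ k) * endGap f a b ((b - a) / 2 ^ k) ≤ 3 * c := by
  induction k with
  | zero => simpa [endGap] using hc
  | succ k ih =>
    set ℓ := (b - a) / 2 ^ (k + 1)
    have hℓ : 0 < ℓ := by have := sub_pos.2 hab; positivity
    have hdouble : (b - a) / 2 ^ k = 2 * ℓ := by simp only [ℓ, pow_succ]; field_simp
    have h2ℓ : 2 * ℓ ≤ b - a := hdouble ▸ div_le_self (sub_pos.2 hab).le (one_le_pow₀ one_le_two)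
    have hstep := sqrt_two_mul_mul_endGap_sub_le hℓ h2ℓ hf hD
    rw [hdouble, Real.sqrt_mul zero_le_two] at ih
    rw [Real.sqrt_mul zero_le_two] at hstep
    have hsqrt2 : 4 / 3 ≤ Real.sqrt 2 := Real.le_sqrt_of_sq_le (by norm_num)
    nlinarith

theorem sub_sub_two_mul_le_endGap {R s ε w : ℝ} (hR : 0 ≤ R) (hs : 0 ≤ s) (hw : 0 < w)
    (hwab : w ≤ b - a) (hε : R * w ^ s ≤ ε) (hf : IntegrableOn f (Icc a b))
    (hHol : ∀ u ∈ Icc a b, ∀ v ∈ Icc a b, v ≤ u → f u - f v ≤ R * (u - v) ^ s) :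
    f b - f a - 2 * ε ≤ endGap f a b w := by
  have hclose : ∀ d, 0 ≤ d → d ≤ w → R * d ^ s ≤ ε := fun d hd0 hdw =>
    (mul_le_mul_of_nonneg_left (Real.rpow_le_rpow hd0 hdw hs) hR).trans hε
  have hend : f b - ε ≤ fbar f (b - w) b :=
    le_fbar_of_forall_le (by linarith) (hf.mono_set (Icc_subset_Icc (by linarith) le_rfl))
      fun u hu => by
        linarith [hHol b ⟨by linarith, le_rfl⟩ u ⟨by linarith [hu.1], hu.2⟩ hu.2,
          hclose (b - u) (by linarith [hu.2]) (by linarith [hu.1])]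
  have hstart : fbar f a (a + w) ≤ f a + ε :=
    fbar_le_of_forall_le (by linarith) (hf.mono_set (Icc_subset_Icc le_rfl (by linarith)))
      fun u hu => by
        linarith [hHol u ⟨hu.1, by linarith [hu.2]⟩ a ⟨le_rfl, by linarith⟩ hu.1,
          hclose (u - a) (by linarith [hu.1]) (by linarith [hu.2])]
  rw [endGap]
  linarith

end Dyadic

theorem exists_half_le_div_two_pow_le {Λ L : ℝ} (hΛ : 0 < Λ) (hΛL : Λ ≤ L) :
    ∃ k : ℕ, Λ / 2 ≤ L / 2 ^ k ∧ L / 2 ^ k ≤ Λ := by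
  obtain ⟨n, hlow, hhigh⟩ := exists_nat_pow_near ((one_le_div hΛ).2 hΛL) one_lt_two
  refine ⟨n + 1, ?_, ?_⟩
  · rw [le_div_iff₀ hΛ] at hlow
    rw [pow_succ, le_div_iff₀ (by positivity)]
    linarith
  · rw [div_lt_iff₀ hΛ] at hhigh
    rw [div_le_iff₀ (by positivity)]
    linarith

theorem rate_eq_mul_sqrt {s R ρ : ℝ} (hs : 0 < s) (hR : 0 < R) (hρ : 0 < ρ) :
    1 / 32 * (8 : ℝ) ^ (-(1 : ℝ) / (2 * s)) * R ^ (-(1 : ℝ) / (2 * s)) * ρ ^ (1 + 1 / (2 * s)) =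
      ρ * Real.sqrt ((ρ / (8 * R)) ^ (1 / s)) / 32 := by
  have hsqrt : Real.sqrt ((ρ / (8 * R)) ^ (1 / s)) = (ρ / (8 * R)) ^ (1 / (2 * s)) := by
    rw [Real.sqrt_eq_rpow, ← Real.rpow_mul (by positivity)]
    congr 1
    field_simp
  rw [hsqrt, Real.div_rpow hρ.le (by positivity), Real.mul_rpow (by norm_num) hR.le,
    Real.rpow_add hρ, Real.rpow_one, neg_div, Real.rpow_neg (by norm_num), Real.rpow_neg hR.le]
  field_simp

theorem exists_le_windowSup_of_holder {f : ℝ → ℝ} {a b R s : ℝ} (hs : 0 < s) (hR : 0 < R)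
    (hab : a < b) (hf : IntegrableOn f (Icc a b))
    (hHol : ∀ u ∈ Icc a b, ∀ v ∈ Icc a b, v ≤ u → f u - f v ≤ R * (u - v) ^ s)
    (hρ : 0 < f b - f a) :
    ∃ x y : ℝ, a ≤ x ∧ x < y ∧ y ≤ b ∧
      (f b - f a) * Real.sqrt (((f b - f a) / (8 * R)) ^ (1 / s)) / 32 ≤ windowSup f x y := by
  set ρ := f b - f a with hρdef
  set Λ := (ρ / (8 * R)) ^ (1 / s)
  have hΛ : 0 < Λ := by positivity
  have hRΛ : R * Λ ^ s = ρ / 8 := by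
    rw [← Real.rpow_mul (by positivity), one_div_mul_cancel hs.ne', Real.rpow_one]
    field_simp
  have hΛL : Λ ≤ b - a := by
    by_contra! hlt
    have := mul_lt_mul_of_pos_left (Real.rpow_lt_rpow (by linarith) hlt hs) hR
    linarith [hHol b ⟨hab.le, le_rfl⟩ a ⟨le_rfl, hab.le⟩ hab.le]
  by_contra! hsmall
  obtain ⟨k, hwΛ, hwΛ'⟩ := exists_half_le_div_two_pow_le hΛ hΛL
  have hupper := sqrt_mul_endGap_dyadic_le hab hf (c := 4 * (ρ * Real.sqrt Λ / 32))
    (by positivity) (fun x y hx hxy hy => (sqrt_mul_fbar_midpoint_sub_le hxy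
      (hf.mono_set (Icc_subset_Icc hx hy))).trans
        (mul_le_mul_of_nonneg_left (hsmall x y hx hxy hy).le zero_le_four)) k
  set w := (b - a) / 2 ^ k
  have hw : 0 < w := by linarith
  have hlower := sub_sub_two_mul_le_endGap hR.le hs.le hw (hwΛ'.trans hΛL)
    ((mul_le_mul_of_nonneg_left (Real.rpow_le_rpow hw.le hwΛ' hs.le) hR.le).trans hRΛ.le)
    hf hHol
  rw [← hρdef] at hlower
  have hsqrtΛ : Real.sqrt Λ ≤ Real.sqrt 2 * Real.sqrt w := by
    rw [← Real.sqrt_mul zero_le_two]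
    exact Real.sqrt_le_sqrt (by linarith)
  have hsqrt2 : Real.sqrt 2 < 2 := (Real.sqrt_lt' two_pos).2 (by norm_num)
  have hsqrtw : 0 < Real.sqrt w := Real.sqrt_pos.2 hw
  nlinarith [mul_le_mul_of_nonneg_left hlower hsqrtw.le, mul_le_mul_of_nonneg_left hsqrtΛ hρ.le,
    mul_pos (mul_pos hρ hsqrtw) (sub_pos.2 hsqrt2)]

theorem statement_14 (s : ℝ) (hs : s ∈ Ioc (0:ℝ) 1) :
    ∃ C : ℝ, 0 < C ∧ ∀ R : ℝ, 0 < R → ∀ f : ℝ → ℝ, IntegrableOn f (Icc 0 1) →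
      (∀ u ∈ Icc (0:ℝ) 1, ∀ v ∈ Icc (0:ℝ) 1, v ≤ u → f u - f v ≤ R * (u - v) ^ s) →
      ∀ x₀ y₀ : ℝ, 0 ≤ x₀ → x₀ < y₀ → y₀ ≤ 1 → 0 < f y₀ - f x₀ →
      ∃ x y : ℝ, x₀ ≤ x ∧ x < y ∧ y ≤ y₀ ∧
        C * R ^ (-(1:ℝ) / (2 * s)) * (f y₀ - f x₀) ^ (1 + 1 / (2 * s)) ≤
          sSup ((fun t => (t - x) / Real.sqrt (y - x) * (fbar f x y - fbar f x t)) ''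
            Icc x y) := by
  have hs0 : 0 < s := hs.1
  refine ⟨1 / 32 * (8 : ℝ) ^ (-(1 : ℝ) / (2 * s)), by positivity, ?_⟩
  intro R hR f hf hHol x₀ y₀ hx₀ hxy hy₀ hρ
  rw [rate_eq_mul_sqrt hs0 hR hρ]
  exact exists_le_windowSup_of_holder hs0 hR hxy (hf.mono_set (Icc_subset_Icc hx₀ hy₀))
    (fun u hu v hv => hHol u ⟨hx₀.trans hu.1, hu.2.trans hy₀⟩ v ⟨hx₀.trans hv.1, hv.2.trans hy₀⟩) hρ

end
end

section
/- Let s ∈ (0,1] and L ≥ 1, and let G(s,L) be the set of integrable functions g : [0,1] → ℝ with g(0) = 0, g(1) = 1, and g(u) − g(v) ≤ L(u−v)^s for all 0 ≤ v ≤ u ≤ 1. Then for every g ∈ G(s,L), sup_{0 ≤ x < t < y ≤ 1} ((t−x)/√(y−x)) (ḡ_{xy} − ḡ_{xt}) ≥ (s/(7 · 2^{1+s+1/s})) L^{−1/(2s)}. -/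
open MeasureTheory ProbabilityTheory Set

noncomputable section

/-! Let `E` be the supremum. Taking `(x, t, y) = (0, ℓ, 2ℓ)` or `(1 - 2ℓ, 1 - ℓ, 1)` shows that
halving `ℓ = 2⁻ʲ` moves the mean of `g` over `[0, ℓ]`, or over `[1 - ℓ, 1]`, by at most
`2 E √2 ^ j`. Both means equal `ḡ₀₁` at `ℓ = 1`; at `ℓ = 2⁻ᴷ` with `L 2^(-K s) ≤ 1/4` the Hölder
condition puts the first below `1/4` and the second above `3/4`. Telescoping gives
`1/2 ≤ 4 E ∑_{j<K} √2 ^ j`, so `E ≳ √2^(-K)`, and the minimal such `K` has `√2 ^ K ≈ L^(1/(2s))`. -/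

def scaledMeanGap (g : ℝ → ℝ) (x t y : ℝ) : ℝ :=
  (t - x) / Real.sqrt (y - x) * (fbar g x y - fbar g x t)

def scaledMeanGapSet (g : ℝ → ℝ) : Set ℝ :=
  {w | ∃ x t y : ℝ, 0 ≤ x ∧ x < t ∧ t < y ∧ y ≤ 1 ∧ w = scaledMeanGap g x t y}

section

variable {g : ℝ → ℝ} {E s L : ℝ}

theorem fbar_le_of_forall_le_s15 {a b c : ℝ} (hab : a < b) (hg : IntervalIntegrable g volume a b)
    (h : ∀ u ∈ Icc a b, g u ≤ c) : fbar g a b ≤ c := by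
  have hint := intervalIntegral.integral_mono_on hab.le hg intervalIntegrable_const h
  rw [intervalIntegral.integral_const, smul_eq_mul] at hint
  rw [fbar, inv_mul_le_iff₀ (sub_pos.2 hab)]
  exact hint

theorem le_fbar_of_forall_le_s15 {a b c : ℝ} (hab : a < b) (hg : IntervalIntegrable g volume a b)
    (h : ∀ u ∈ Icc a b, c ≤ g u) : c ≤ fbar g a b := by
  have hint := intervalIntegral.integral_mono_on hab.le intervalIntegrable_const hg h
  rw [intervalIntegral.integral_const, smul_eq_mul] at hint
  rw [fbar, le_inv_mul_iff₀ (sub_pos.2 hab)]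
  exact hint

theorem abs_fbar_le {a b M : ℝ} (hab : a < b) (h : ∀ u ∈ Icc a b, |g u| ≤ M) :
    |fbar g a b| ≤ M := by
  have hint : ‖∫ u in a..b, g u‖ ≤ M * |b - a| :=
    intervalIntegral.norm_integral_le_of_norm_le_const fun u hu => by
      rw [uIoc_of_le hab.le] at hu
      exact h u (Ioc_subset_Icc_self hu)
  rw [Real.norm_eq_abs, abs_of_pos (sub_pos.2 hab)] at hint
  rw [fbar, abs_mul, abs_inv, abs_of_pos (sub_pos.2 hab), inv_mul_le_iff₀ (sub_pos.2 hab)]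
  linarith

theorem fbar_eq_midpoint_average {a m b : ℝ} (hm : m - a = b - m)
    (ham : IntervalIntegrable g volume a m) (hmb : IntervalIntegrable g volume m b) :
    fbar g a b = (fbar g a m + fbar g m b) / 2 := by
  rw [fbar, fbar, fbar, ← intervalIntegral.integral_add_adjacent_intervals ham hmb,
    show b - a = 2 * (m - a) by linarith, ← hm, mul_inv]
  ring

theorem intervalIntegrable_of_integrableOn_unitInterval {a b : ℝ}
    (hg : IntegrableOn g (Icc 0 1)) (ha : 0 ≤ a) (hab : a ≤ b) (hb : b ≤ 1) :
    IntervalIntegrable g volume a b :=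
  (intervalIntegrable_iff_integrableOn_Icc_of_le hab).2 (hg.mono_set (Icc_subset_Icc ha hb))


theorem bddAbove_scaledMeanGapSet {M : ℝ} (hM : ∀ u ∈ Icc (0:ℝ) 1, |g u| ≤ M) :
    BddAbove (scaledMeanGapSet g) := by
  refine ⟨2 * M, ?_⟩
  rintro w ⟨x, t, y, hx, hxt, hty, hy, rfl⟩
  have hsqrt : 0 < Real.sqrt (y - x) := Real.sqrt_pos.2 (by linarith)
  have hfactor : |(t - x) / Real.sqrt (y - x)| ≤ 1 := by
    rw [abs_of_nonneg (div_nonneg (by linarith) hsqrt.le), div_le_one hsqrt]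
    calc t - x ≤ y - x := by linarith
      _ ≤ Real.sqrt (y - x) := Real.le_sqrt_of_sq_le (by nlinarith)
  have hdiff : |fbar g x y - fbar g x t| ≤ 2 * M := by
    have hy' := abs_fbar_le (hxt.trans hty) fun u hu => hM u ⟨hx.trans hu.1, hu.2.trans hy⟩
    have ht' := abs_fbar_le hxt fun u hu => hM u ⟨hx.trans hu.1, hu.2.trans (hty.le.trans hy)⟩
    calc _ ≤ |fbar g x y| + |fbar g x t| := abs_sub _ _
      _ ≤ 2 * M := by linarith
  calc scaledMeanGap g x t y ≤ |scaledMeanGap g x t y| := le_abs_self _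
    _ ≤ 1 * (2 * M) := by
      rw [scaledMeanGap, abs_mul]
      exact mul_le_mul hfactor hdiff (abs_nonneg _) zero_le_one
    _ = 2 * M := one_mul _

theorem fbar_sub_le_of_scaledMeanGap_le {x t y : ℝ} (hxt : x < t) (hty : t < y)
    (h : scaledMeanGap g x t y ≤ E) :
    fbar g x y - fbar g x t ≤ E * (Real.sqrt (y - x) / (t - x)) := by
  have hsqrt : 0 < Real.sqrt (y - x) := Real.sqrt_pos.2 (by linarith)
  rw [scaledMeanGap, div_mul_eq_mul_div, div_le_iff₀ hsqrt, mul_comm] at h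
  rw [mul_div_assoc', le_div_iff₀ (sub_pos.2 hxt)]
  exact h


theorem fbar_zero_two_mul_sub_le (hE : E ∈ upperBounds (scaledMeanGapSet g)) {ℓ : ℝ}
    (hℓ : 0 < ℓ) (h2ℓ : 2 * ℓ ≤ 1) :
    fbar g 0 (2 * ℓ) - fbar g 0 ℓ ≤ E * (Real.sqrt (2 * ℓ) / ℓ) := by
  have h := fbar_sub_le_of_scaledMeanGap_le (g := g) hℓ (by linarith)
    (hE ⟨0, ℓ, 2 * ℓ, le_rfl, hℓ, by linarith, h2ℓ, rfl⟩)
  simpa only [sub_zero] using h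

theorem fbar_one_sub_sub_le (hg : IntegrableOn g (Icc 0 1))
    (hE : E ∈ upperBounds (scaledMeanGapSet g)) {ℓ : ℝ} (hℓ : 0 < ℓ) (h2ℓ : 2 * ℓ ≤ 1) :
    fbar g (1 - ℓ) 1 - fbar g (1 - 2 * ℓ) 1 ≤ E * (Real.sqrt (2 * ℓ) / ℓ) := by
  have h := fbar_sub_le_of_scaledMeanGap_le (g := g) (x := 1 - 2 * ℓ) (by linarith)
    (by linarith) (hE ⟨1 - 2 * ℓ, 1 - ℓ, 1, by linarith, by linarith, by linarith, le_rfl, rfl⟩)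
  have hmid := fbar_eq_midpoint_average (g := g) (a := 1 - 2 * ℓ) (m := 1 - ℓ) (b := 1) (by ring)
    (intervalIntegrable_of_integrableOn_unitInterval hg (by linarith) (by linarith) (by linarith))
    (intervalIntegrable_of_integrableOn_unitInterval hg (by linarith) (by linarith) le_rfl)
  rw [show 1 - (1 - 2 * ℓ) = 2 * ℓ by ring, show 1 - ℓ - (1 - 2 * ℓ) = ℓ by ring] at h
  linarith

theorem two_mul_inv_two_pow_succ (n : ℕ) : 2 * ((2:ℝ) ^ (n + 1))⁻¹ = ((2:ℝ) ^ n)⁻¹ := by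
  rw [pow_succ]
  field_simp

theorem sqrt_two_mul_inv_two_pow_succ_div (n : ℕ) :
    Real.sqrt (2 * ((2:ℝ) ^ (n + 1))⁻¹) / ((2:ℝ) ^ (n + 1))⁻¹ = 2 * Real.sqrt 2 ^ n := by
  have hpow : (2:ℝ) ^ n = Real.sqrt 2 ^ n * Real.sqrt 2 ^ n := by
    rw [← mul_pow, Real.mul_self_sqrt zero_le_two]
  rw [two_mul_inv_two_pow_succ, Real.sqrt_inv, hpow, Real.sqrt_mul_self (by positivity), pow_succ,
    hpow]
  field_simp

theorem fbar_one_sub_inv_two_pow_sub_le (hg : IntegrableOn g (Icc 0 1))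
    (hE : E ∈ upperBounds (scaledMeanGapSet g)) (K : ℕ) :
    fbar g (1 - ((2:ℝ) ^ K)⁻¹) 1 - fbar g 0 ((2:ℝ) ^ K)⁻¹ ≤
      4 * E * ∑ j ∈ Finset.range K, Real.sqrt 2 ^ j := by
  induction K with
  | zero => simp
  | succ n ih =>
    have hℓ : (0:ℝ) < ((2:ℝ) ^ (n + 1))⁻¹ := by positivity
    have h2ℓ := two_mul_inv_two_pow_succ n
    have h2ℓ1 : 2 * ((2:ℝ) ^ (n + 1))⁻¹ ≤ 1 := h2ℓ ▸ inv_le_one_of_one_le₀ (one_le_pow₀ one_le_two)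
    have hleft := fbar_zero_two_mul_sub_le hE hℓ h2ℓ1
    have hright := fbar_one_sub_sub_le hg hE hℓ h2ℓ1
    rw [sqrt_two_mul_inv_two_pow_succ_div, h2ℓ] at hleft hright
    rw [Finset.sum_range_succ]
    linarith


theorem abs_le_of_holder (hs : 0 ≤ s) (hL : 0 ≤ L) (hg0 : g 0 = 0) (hg1 : g 1 = 1)
    (hghold : ∀ u ∈ Icc (0:ℝ) 1, ∀ v ∈ Icc (0:ℝ) 1, v ≤ u → g u - g v ≤ L * (u - v) ^ s) :
    ∀ u ∈ Icc (0:ℝ) 1, |g u| ≤ L := by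
  intro u hu
  have hup := hghold u hu 0 ⟨le_rfl, zero_le_one⟩ hu.1
  have hlow := hghold 1 ⟨zero_le_one, le_rfl⟩ u hu hu.2
  have hu_s : u ^ s ≤ 1 := Real.rpow_le_one hu.1 hu.2 hs
  have hu_s' : (1 - u) ^ s ≤ 1 := Real.rpow_le_one (by linarith [hu.2]) (by linarith [hu.1]) hs
  rw [hg0, sub_zero, sub_zero] at hup
  rw [hg1] at hlow
  rw [abs_le]
  constructor <;> nlinarith

theorem fbar_zero_le_of_holder (hs : 0 ≤ s) (hL : 0 ≤ L) (hg : IntegrableOn g (Icc 0 1))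
    (hg0 : g 0 = 0)
    (hghold : ∀ u ∈ Icc (0:ℝ) 1, ∀ v ∈ Icc (0:ℝ) 1, v ≤ u → g u - g v ≤ L * (u - v) ^ s)
    {δ : ℝ} (hδ : 0 < δ) (hδ1 : δ ≤ 1) : fbar g 0 δ ≤ L * δ ^ s := by
  refine fbar_le_of_forall_le_s15 hδ
    (intervalIntegrable_of_integrableOn_unitInterval hg le_rfl hδ.le hδ1) fun u hu => ?_
  have h := hghold u ⟨hu.1, hu.2.trans hδ1⟩ 0 ⟨le_rfl, zero_le_one⟩ hu.1
  rw [hg0, sub_zero, sub_zero] at h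
  exact h.trans (mul_le_mul_of_nonneg_left (Real.rpow_le_rpow hu.1 hu.2 hs) hL)

theorem one_sub_le_fbar_of_holder (hs : 0 ≤ s) (hL : 0 ≤ L) (hg : IntegrableOn g (Icc 0 1))
    (hg1 : g 1 = 1)
    (hghold : ∀ u ∈ Icc (0:ℝ) 1, ∀ v ∈ Icc (0:ℝ) 1, v ≤ u → g u - g v ≤ L * (u - v) ^ s)
    {δ : ℝ} (hδ : 0 < δ) (hδ1 : δ ≤ 1) : 1 - L * δ ^ s ≤ fbar g (1 - δ) 1 := by
  refine le_fbar_of_forall_le_s15 (by linarith)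
    (intervalIntegrable_of_integrableOn_unitInterval hg (by linarith) (by linarith) le_rfl)
    fun u hu => ?_
  have h := hghold 1 ⟨zero_le_one, le_rfl⟩ u ⟨by linarith [hu.1], hu.2⟩ hu.2
  have hpow : (1 - u) ^ s ≤ δ ^ s := Real.rpow_le_rpow (by linarith [hu.2]) (by linarith [hu.1]) hs
  rw [hg1] at h
  nlinarith

end

theorem div_le_of_half_le_four_mul_geom_sum {r E : ℝ} (hr : 1 < r) {K : ℕ}
    (h : 1 / 2 ≤ 4 * E * ∑ j ∈ Finset.range K, r ^ j) : (r - 1) / (8 * r ^ K) ≤ E := by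
  have hr1 : 0 < r - 1 := sub_pos.2 hr
  have hrK : 0 < r ^ K := pow_pos (by linarith) K
  rw [geom_sum_eq hr.ne', mul_div_assoc', le_div_iff₀ hr1] at h
  rw [div_le_iff₀ (by positivity)]
  have hE : 0 < E := by
    by_contra! hE
    nlinarith [one_le_pow₀ hr.le (n := K)]
  nlinarith

theorem two_mul_le_two_rpow {s : ℝ} (hs0 : 0 ≤ s) (hs1 : s ≤ 1) : 2 * s ≤ (2:ℝ) ^ s := by
  have hbern : (2:ℝ) ^ (1 - s) ≤ 2 - s := by
    have h := rpow_one_add_le_one_add_mul_self (s := 1) (by norm_num) (p := 1 - s)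
      (by linarith) (by linarith)
    norm_num at h
    linarith
  have hsplit : (2:ℝ) ^ s * (2:ℝ) ^ (1 - s) = 2 := by
    rw [← Real.rpow_add two_pos, add_sub_cancel, Real.rpow_one]
  have hpos : (0:ℝ) < (2:ℝ) ^ s := Real.rpow_pos_of_pos two_pos s
  nlinarith [mul_le_mul_of_nonneg_left hbern (mul_nonneg hpos.le hs0), sq_nonneg (1 - s)]

theorem mul_inv_two_pow_rpow_le {s L : ℝ} {n : ℕ} (h : 4 * L ≤ ((2:ℝ) ^ s) ^ n) :
    L * (((2:ℝ) ^ n)⁻¹) ^ s ≤ 1 / 4 := by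
  have hpos : (0:ℝ) < ((2:ℝ) ^ s) ^ n := pow_pos (Real.rpow_pos_of_pos two_pos s) n
  rw [Real.inv_rpow (by positivity), ← Real.rpow_pow_comm zero_le_two, ← div_eq_mul_inv,
    div_le_iff₀ hpos]
  linarith

theorem sqrt_two_pow_le {s L : ℝ} (hs : 0 < s) (hL : 0 ≤ L) {n : ℕ}
    (h : ((2:ℝ) ^ s) ^ n ≤ 4 * L) :
    Real.sqrt 2 ^ n ≤ (2:ℝ) ^ (1 / s) * L ^ (1 / (2 * s)) := by
  rw [← Real.rpow_le_rpow_iff (by positivity) (by positivity) (by positivity : 0 < 2 * s),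
    Real.mul_rpow (by positivity) (by positivity), ← Real.rpow_mul zero_le_two,
    ← Real.rpow_mul hL, Real.rpow_mul (by positivity), Real.rpow_two, ← pow_mul, mul_comm n,
    pow_mul, Real.sq_sqrt zero_le_two, ← Real.rpow_pow_comm zero_le_two,
    show 1 / s * (2 * s) = 2 by field_simp, show 1 / (2 * s) * (2 * s) = 1 by field_simp,
    Real.rpow_one, Real.rpow_two]
  linarith

theorem div_seven_mul_two_rpow_le {s : ℝ} (hs0 : 0 < s) (hs1 : s ≤ 1) :
    s / (7 * 2 ^ (1 + s + 1 / s)) ≤ (Real.sqrt 2 - 1) / (8 * Real.sqrt 2) / (2:ℝ) ^ (1 / s) := by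
  have h2s := two_mul_le_two_rpow hs0.le hs1
  have hsqrt : (7:ℝ) / 5 ≤ Real.sqrt 2 := Real.le_sqrt_of_sq_le (by norm_num)
  have hpos : (0:ℝ) < (2:ℝ) ^ s := Real.rpow_pos_of_pos two_pos s
  rw [Real.rpow_add two_pos, Real.rpow_add two_pos, Real.rpow_one, div_div,
    div_le_div_iff₀ (by positivity) (by positivity)]
  have h2inv : (0:ℝ) < (2:ℝ) ^ (1 / s) := Real.rpow_pos_of_pos two_pos _
  have key : s * (8 * Real.sqrt 2) ≤ (Real.sqrt 2 - 1) * (7 * (2 * 2 ^ s)) := by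
    nlinarith [mul_le_mul_of_nonneg_left h2s (by linarith : (0:ℝ) ≤ 7 * (Real.sqrt 2 - 1))]
  nlinarith [mul_le_mul_of_nonneg_right key h2inv.le]

theorem statement_15 (s L : ℝ) (hs : s ∈ Ioc (0:ℝ) 1) (hL : 1 ≤ L)
    (g : ℝ → ℝ) (hg : IntegrableOn g (Icc 0 1)) (hg0 : g 0 = 0) (hg1 : g 1 = 1)
    (hghold : ∀ u ∈ Icc (0:ℝ) 1, ∀ v ∈ Icc (0:ℝ) 1, v ≤ u → g u - g v ≤ L * (u - v) ^ s) :
    s / (7 * 2 ^ (1 + s + 1 / s)) * L ^ (-(1:ℝ) / (2 * s)) ≤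
      sSup {w : ℝ | ∃ x t y : ℝ, 0 ≤ x ∧ x < t ∧ t < y ∧ y ≤ 1 ∧
        w = (t - x) / Real.sqrt (y - x) * (fbar g x y - fbar g x t)} := by
  obtain ⟨hs0, hs1⟩ := hs
  have hL0 : 0 ≤ L := zero_le_one.trans hL
  change _ ≤ sSup (scaledMeanGapSet g)
  -- `sSup` of a set that is not bounded above is `0`
  have hE : sSup (scaledMeanGapSet g) ∈ upperBounds (scaledMeanGapSet g) := fun _ hw =>
    le_csSup (bddAbove_scaledMeanGapSet (abs_le_of_holder hs0.le hL0 hg0 hg1 hghold)) hw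
  obtain ⟨N, hN_le, hN_lt⟩ := exists_nat_pow_near (by linarith : 1 ≤ 4 * L)
    (Real.one_lt_rpow one_lt_two hs0)
  set δ : ℝ := ((2:ℝ) ^ (N + 1))⁻¹
  have hδ : 0 < δ := by positivity
  have hδ1 : δ ≤ 1 := inv_le_one_of_one_le₀ (one_le_pow₀ one_le_two)
  have hδs : L * δ ^ s ≤ 1 / 4 := mul_inv_two_pow_rpow_le hN_lt.le
  have hgap : 1 / 2 ≤ fbar g (1 - δ) 1 - fbar g 0 δ := by
    linarith [fbar_zero_le_of_holder hs0.le hL0 hg hg0 hghold hδ hδ1,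
      one_sub_le_fbar_of_holder hs0.le hL0 hg hg1 hghold hδ hδ1]
  have hElow := div_le_of_half_le_four_mul_geom_sum Real.one_lt_sqrt_two
    (hgap.trans (fbar_one_sub_inv_two_pow_sub_le hg hE (N + 1)))
  have hc : Real.sqrt 2 ^ N ≤ (2:ℝ) ^ (1 / s) * L ^ (1 / (2 * s)) := sqrt_two_pow_le hs0 hL0 hN_le
  have hLpow : L ^ (-(1:ℝ) / (2 * s)) = (L ^ (1 / (2 * s)))⁻¹ := by
    rw [neg_div, Real.rpow_neg hL0]
  calc s / (7 * 2 ^ (1 + s + 1 / s)) * L ^ (-(1:ℝ) / (2 * s))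
      ≤ (Real.sqrt 2 - 1) / (8 * Real.sqrt 2) / (2:ℝ) ^ (1 / s) * L ^ (-(1:ℝ) / (2 * s)) :=
        mul_le_mul_of_nonneg_right (div_seven_mul_two_rpow_le hs0 hs1) (by positivity)
    _ = (Real.sqrt 2 - 1) / (8 * ((2:ℝ) ^ (1 / s) * L ^ (1 / (2 * s)) * Real.sqrt 2)) := by
        rw [hLpow]; field_simp
    _ ≤ (Real.sqrt 2 - 1) / (8 * Real.sqrt 2 ^ (N + 1)) := by
        rw [pow_succ]
        gcongr
        exact sub_nonneg.2 Real.one_lt_sqrt_two.le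
    _ ≤ sSup (scaledMeanGapSet g) := hElow

end
end

section
/- Let f be continuously differentiable on [0,1], let t ∈ (0,1), Δ > 0 with [t−Δ, t+Δ] ⊆ [0,1], and let 0 < δ ≤ Δ and M, λ > 0. Assume f'(u) ≥ 0 for all u ∈ [t−Δ, t+Δ] and f'(u) ≥ Mλ for all u ∈ [t−δ, t+δ]. Then, with x = t−Δ and y = t+Δ, ((t−x)/√(y−x)) (f̄_{xy} − f̄_{xt}) ≥ M δ² λ / (2√(2Δ)). -/
open MeasureTheory ProbabilityTheory Set

noncomputable section

/-! With `x = t - Δ` and `y = t + Δ`, averaging over `[x, y]` splits into the two halves, so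
`f̄_{xy} - f̄_{xt} = (f̄_{ty} - f̄_{xt}) / 2` and the claim becomes
`∫_t^{t+Δ} f - ∫_{t-Δ}^t f ≥ M λ δ²`. Reflecting the left half about `t`, this difference is
`∫_0^Δ (f (t + s) - f (t - s)) ds`. By the mean value theorem the integrand is nonnegative, and
at least `2 M λ s` for `s ≤ δ`, which integrates to `M λ δ²`. -/

open intervalIntegral

lemma mul_sub_le_sub_of_hasDerivAt {f f' : ℝ → ℝ} {a b C : ℝ} (hab : a ≤ b)
    (hderiv : ∀ u ∈ Icc a b, HasDerivAt f (f' u) u) (hC : ∀ u ∈ Icc a b, C ≤ f' u) :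
    C * (b - a) ≤ f b - f a :=
  (convex_Icc a b).mul_sub_le_image_sub_of_le_deriv
    (fun u hu => (hderiv u hu).continuousAt.continuousWithinAt)
    (fun u hu => (hderiv u (interior_subset hu)).differentiableAt.differentiableWithinAt)
    (fun u hu => (hderiv u (interior_subset hu)).deriv ▸ hC u (interior_subset hu))
    a (left_mem_Icc.2 hab) b (right_mem_Icc.2 hab) hab

lemma fbar_sub_fbar_left {f : ℝ → ℝ} {x t y : ℝ} (hxt : x < t) (hty : t < y)
    (hL : IntervalIntegrable f volume x t) (hR : IntervalIntegrable f volume t y) :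
    fbar f x y - fbar f x t = (y - t) / (y - x) * (fbar f t y - fbar f x t) := by
  have hxt' : t - x ≠ 0 := by linarith
  have hty' : y - t ≠ 0 := by linarith
  have hxy' : y - x ≠ 0 := by linarith
  rw [fbar, fbar, fbar, ← integral_add_adjacent_intervals hL hR]
  field_simp
  ring

lemma integral_sub_integral_eq_integral_reflect_sub {f : ℝ → ℝ} {t Δ : ℝ}
    (hL : IntervalIntegrable f volume (t - Δ) t) (hR : IntervalIntegrable f volume t (t + Δ)) :
    (∫ u in t..t + Δ, f u) - ∫ u in t - Δ..t, f u = ∫ s in 0..Δ, (f (t + s) - f (t - s)) := by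
  rw [intervalIntegral.integral_sub, integral_comp_add_left, integral_comp_sub_left]
  · simp
  · simpa using hR.comp_add_left t
  · simpa using (hL.comp_sub_left t).symm

lemma mul_sq_div_two_le_integral {g : ℝ → ℝ} {c δ Δ : ℝ} (hδ : 0 ≤ δ) (hδΔ : δ ≤ Δ)
    (hg : IntervalIntegrable g volume 0 Δ) (hg_nonneg : ∀ s ∈ Icc δ Δ, 0 ≤ g s)
    (hg_lin : ∀ s ∈ Icc 0 δ, c * s ≤ g s) :
    c * δ ^ 2 / 2 ≤ ∫ s in 0..Δ, g s := by
  have h0δ : IntervalIntegrable g volume 0 δ :=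
    hg.mono_set (uIcc_subset_uIcc left_mem_uIcc (by simp [uIcc_of_le (hδ.trans hδΔ), hδ, hδΔ]))
  have hδΔ' : IntervalIntegrable g volume δ Δ :=
    hg.mono_set (uIcc_subset_uIcc (by simp [uIcc_of_le (hδ.trans hδΔ), hδ, hδΔ]) right_mem_uIcc)
  rw [← integral_add_adjacent_intervals h0δ hδΔ']
  have hlin : ∫ s in 0..δ, c * s = c * δ ^ 2 / 2 := by
    rw [intervalIntegral.integral_const_mul, integral_id]
    ring
  have hfirst : ∫ s in 0..δ, c * s ≤ ∫ s in 0..δ, g s :=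
    integral_mono_on hδ ((continuous_const_mul c).intervalIntegrable 0 δ) h0δ hg_lin
  have hsecond : 0 ≤ ∫ s in δ..Δ, g s := intervalIntegral.integral_nonneg hδΔ hg_nonneg
  linarith

lemma two_mul_mul_le_sub_reflect {f f' : ℝ → ℝ} {t r s C : ℝ} (hs : s ∈ Icc 0 r)
    (hderiv : ∀ u ∈ Icc (t - r) (t + r), HasDerivAt f (f' u) u)
    (hC : ∀ u ∈ Icc (t - r) (t + r), C ≤ f' u) :
    2 * C * s ≤ f (t + s) - f (t - s) := by
  have hsub : Icc (t - s) (t + s) ⊆ Icc (t - r) (t + r) :=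
    Icc_subset_Icc (by linarith [hs.2]) (by linarith [hs.2])
  have := mul_sub_le_sub_of_hasDerivAt (by linarith [hs.1])
    (fun u hu => hderiv u (hsub hu)) (fun u hu => hC u (hsub hu))
  linarith

lemma mul_sq_le_integral_sub_integral {f f' : ℝ → ℝ} {t Δ δ c : ℝ} (hδ : 0 ≤ δ) (hδΔ : δ ≤ Δ)
    (hderiv : ∀ u ∈ Icc (t - Δ) (t + Δ), HasDerivAt f (f' u) u)
    (h1 : ∀ u ∈ Icc (t - Δ) (t + Δ), 0 ≤ f' u) (h2 : ∀ u ∈ Icc (t - δ) (t + δ), c ≤ f' u) :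
    c * δ ^ 2 ≤ (∫ u in t..t + Δ, f u) - ∫ u in t - Δ..t, f u := by
  have hf : ContinuousOn f (Icc (t - Δ) (t + Δ)) := fun u hu =>
    (hderiv u hu).continuousAt.continuousWithinAt
  have hL : IntervalIntegrable f volume (t - Δ) t :=
    (hf.mono (Icc_subset_Icc le_rfl (by linarith))).intervalIntegrable_of_Icc (by linarith)
  have hR : IntervalIntegrable f volume t (t + Δ) :=
    (hf.mono (Icc_subset_Icc (by linarith) le_rfl)).intervalIntegrable_of_Icc (by linarith)
  have hgap_int : IntervalIntegrable (fun s => f (t + s) - f (t - s)) volume 0 Δ := by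
    have hR' : IntervalIntegrable (fun s => f (t + s)) volume 0 Δ := by
      simpa using hR.comp_add_left t
    have hL' : IntervalIntegrable (fun s => f (t - s)) volume 0 Δ := by
      simpa using (hL.comp_sub_left t).symm
    exact hR'.sub hL'
  have hgap_nonneg : ∀ s ∈ Icc δ Δ, 0 ≤ f (t + s) - f (t - s) := fun s hs => by
    simpa using two_mul_mul_le_sub_reflect ⟨hδ.trans hs.1, hs.2⟩ hderiv h1
  have hδsub : Icc (t - δ) (t + δ) ⊆ Icc (t - Δ) (t + Δ) :=
    Icc_subset_Icc (by linarith) (by linarith)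
  have hgap_lin : ∀ s ∈ Icc 0 δ, 2 * c * s ≤ f (t + s) - f (t - s) := fun s hs =>
    two_mul_mul_le_sub_reflect hs (fun u hu => hderiv u (hδsub hu)) h2
  rw [integral_sub_integral_eq_integral_reflect_sub hL hR]
  linarith [mul_sq_div_two_le_integral hδ hδΔ hgap_int hgap_nonneg hgap_lin]

theorem statement_18_general (f f' : ℝ → ℝ) (hderiv : ∀ u ∈ Icc (0:ℝ) 1, HasDerivAt f (f' u) u)
    (t Δ δ M lam : ℝ)
    (hsub : Icc (t - Δ) (t + Δ) ⊆ Icc 0 1) (hδ : 0 < δ) (hδΔ : δ ≤ Δ)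
    (h1 : ∀ u ∈ Icc (t - Δ) (t + Δ), 0 ≤ f' u)
    (h2 : ∀ u ∈ Icc (t - δ) (t + δ), M * lam ≤ f' u) :
    M * δ ^ 2 * lam / (2 * Real.sqrt (2 * Δ)) ≤
      (t - (t - Δ)) / Real.sqrt ((t + Δ) - (t - Δ)) *
        (fbar f (t - Δ) (t + Δ) - fbar f (t - Δ) t) := by
  have hΔ : 0 < Δ := hδ.trans_le hδΔ
  have hf : ContinuousOn f (Icc 0 1) := fun u hu =>
    (hderiv u hu).continuousAt.continuousWithinAt
  have hL : IntervalIntegrable f volume (t - Δ) t :=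
    (hf.mono ((Icc_subset_Icc le_rfl (by linarith)).trans hsub)).intervalIntegrable_of_Icc
      (by linarith)
  have hR : IntervalIntegrable f volume t (t + Δ) :=
    (hf.mono ((Icc_subset_Icc (by linarith) le_rfl).trans hsub)).intervalIntegrable_of_Icc
      (by linarith)
  have hmass := mul_sq_le_integral_sub_integral hδ.le hδΔ (fun u hu => hderiv u (hsub hu)) h1 h2
  have hscale : (t - (t - Δ)) / Real.sqrt ((t + Δ) - (t - Δ)) *
      ((t + Δ - t) / (t + Δ - (t - Δ)) * (fbar f t (t + Δ) - fbar f (t - Δ) t)) =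
      ((∫ u in t..t + Δ, f u) - ∫ u in t - Δ..t, f u) / (2 * Real.sqrt (2 * Δ)) := by
    rw [show t + Δ - (t - Δ) = 2 * Δ by ring, fbar, fbar, add_sub_cancel_left, sub_sub_cancel]
    field_simp
  rw [fbar_sub_fbar_left (by linarith) (by linarith) hL hR, hscale]
  gcongr
  linarith

theorem statement_18 (f f' : ℝ → ℝ) (hderiv : ∀ u ∈ Icc (0:ℝ) 1, HasDerivAt f (f' u) u)
    (hcont : ContinuousOn f' (Icc 0 1))
    (t Δ δ M lam : ℝ) (ht : t ∈ Ioo (0:ℝ) 1) (hΔ : 0 < Δ)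
    (hsub : Icc (t - Δ) (t + Δ) ⊆ Icc 0 1) (hδ : 0 < δ) (hδΔ : δ ≤ Δ)
    (hM : 0 < M) (hlam : 0 < lam)
    (h1 : ∀ u ∈ Icc (t - Δ) (t + Δ), 0 ≤ f' u)
    (h2 : ∀ u ∈ Icc (t - δ) (t + δ), M * lam ≤ f' u) :
    M * δ ^ 2 * lam / (2 * Real.sqrt (2 * Δ)) ≤
      (t - (t - Δ)) / Real.sqrt ((t + Δ) - (t - Δ)) *
        (fbar f (t - Δ) (t + Δ) - fbar f (t - Δ) t) :=
  statement_18_general f f' hderiv t Δ δ M lam hsub hδ hδΔ h1 h2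

end
end

section
/- Let 0 ≤ x < y ≤ 1 and let f : [x,y] → ℝ be convex with f(v) − f(u) ≤ R(v−u) for all x ≤ u ≤ v ≤ y, for some R > 0. Then sup_{t∈[x,y]} ((t−x)/√(y−x)) (f̄_{xy} − f̄_{xt}) ≤ (R/2) (y−x)^{3/2}. -/
open MeasureTheory ProbabilityTheory Set

noncomputable section

/-! The one-sided Lipschitz bound says exactly that `g = f - R • id` is antitone on `[x, y]`.
Averages of an antitone function over `[x, t]` decrease in `t`, and the averages of `R • id`
contribute `R (y - t) / 2`, so `(t - x) (f̄_{xy} - f̄_{xt}) ≤ R (t - x) (y - t) / 2 ≤ R (y - x)² / 2`. -/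

theorem antitoneOn_sub_mul_of_sub_le_mul {f : ℝ → ℝ} {s : Set ℝ} {R : ℝ}
    (hf : ∀ u ∈ s, ∀ v ∈ s, u ≤ v → f v - f u ≤ R * (v - u)) :
    AntitoneOn (fun u => f u - R * u) s := by
  intro u hu v hv huv
  linarith [hf u hu v hv huv]

theorem AntitoneOn.fbar_le_fbar {g : ℝ → ℝ} {x t y : ℝ} (hg : AntitoneOn g (Icc x y))
    (hxt : x < t) (hty : t ≤ y) : fbar g x y ≤ fbar g x t := by
  have hg₁ : AntitoneOn g (Icc x t) := hg.mono (Icc_subset_Icc le_rfl hty)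
  have hg₂ : AntitoneOn g (Icc t y) := hg.mono (Icc_subset_Icc hxt.le le_rfl)
  have hint₁ : IntervalIntegrable g volume x t :=
    AntitoneOn.intervalIntegrable (uIcc_of_le hxt.le ▸ hg₁)
  have hint₂ : IntervalIntegrable g volume t y :=
    AntitoneOn.intervalIntegrable (uIcc_of_le hty ▸ hg₂)
  have hlow : (t - x) * g t ≤ ∫ u in x..t, g u := by
    simpa using intervalIntegral.integral_mono_on hxt.le intervalIntegrable_const hint₁
      fun u hu => hg₁ hu ⟨hxt.le, le_rfl⟩ hu.2
  have hup : ∫ u in t..y, g u ≤ (y - t) * g t := by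
    simpa using intervalIntegral.integral_mono_on hty hint₂ intervalIntegrable_const
      fun u hu => hg₂ ⟨le_rfl, hty⟩ hu hu.1
  rw [fbar, fbar, ← intervalIntegral.integral_add_adjacent_intervals hint₁ hint₂,
    inv_mul_eq_div, inv_mul_eq_div, div_le_div_iff₀ (by linarith) (by linarith)]
  nlinarith [mul_le_mul_of_nonneg_left hup (sub_nonneg.2 hxt.le),
    mul_le_mul_of_nonneg_left hlow (sub_nonneg.2 hty)]

theorem fbar_add_mul_id {g : ℝ → ℝ} {x t : ℝ} (R : ℝ) (hg : IntervalIntegrable g volume x t)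
    (hxt : x ≠ t) : fbar (fun u => g u + R * u) x t = fbar g x t + R * (x + t) / 2 := by
  have hsub : t - x ≠ 0 := sub_ne_zero.2 hxt.symm
  rw [fbar, fbar,
    intervalIntegral.integral_add hg (Continuous.intervalIntegrable (by fun_prop) x t),
    intervalIntegral.integral_const_mul, integral_id]
  field_simp
  ring

theorem mul_sub_fbar_le_of_sub_le_mul {f : ℝ → ℝ} {x t y R : ℝ} (hxy : x < y)
    (hf : ∀ u ∈ Icc x y, ∀ v ∈ Icc x y, u ≤ v → f v - f u ≤ R * (v - u))
    (hxt : x ≤ t) (hty : t ≤ y) :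
    (t - x) * (fbar f x y - fbar f x t) ≤ R / 2 * ((t - x) * (y - t)) := by
  rcases hxt.eq_or_lt with rfl | hxt
  · simp
  set g := fun u => f u - R * u
  have hg : AntitoneOn g (Icc x y) := antitoneOn_sub_mul_of_sub_le_mul hf
  have hfg : f = fun u => g u + R * u := by funext u; simp [g]
  have hint : ∀ s ∈ Icc x y, IntervalIntegrable g volume x s := fun s hs =>
    AntitoneOn.intervalIntegrable (uIcc_of_le hs.1 ▸ hg.mono (Icc_subset_Icc le_rfl hs.2))
  rw [hfg, fbar_add_mul_id R (hint y ⟨hxy.le, le_rfl⟩) hxy.ne,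
    fbar_add_mul_id R (hint t ⟨hxt.le, hty⟩) hxt.ne]
  nlinarith [hg.fbar_le_fbar hxt hty]

theorem statement_19_general (x y R : ℝ) (hxy : x < y) (hR : 0 < R) (f : ℝ → ℝ)
    (hlip : ∀ u ∈ Icc x y, ∀ v ∈ Icc x y, u ≤ v → f v - f u ≤ R * (v - u)) :
    sSup ((fun t => (t - x) / Real.sqrt (y - x) * (fbar f x y - fbar f x t)) '' Icc x y) ≤
      R / 2 * (y - x) ^ ((3:ℝ) / 2) := by
  have hyx : 0 < y - x := sub_pos.2 hxy
  have hsqrt : 0 < Real.sqrt (y - x) := Real.sqrt_pos.2 hyx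
  refine Real.sSup_le ?_ (by positivity)
  rintro _ ⟨t, ⟨hxt, hty⟩, rfl⟩
  calc (t - x) / Real.sqrt (y - x) * (fbar f x y - fbar f x t)
      = (t - x) * (fbar f x y - fbar f x t) / Real.sqrt (y - x) := div_mul_eq_mul_div _ _ _
    _ ≤ R / 2 * ((t - x) * (y - t)) / Real.sqrt (y - x) :=
      div_le_div_of_nonneg_right (mul_sub_fbar_le_of_sub_le_mul hxy hlip hxt hty) hsqrt.le
    _ ≤ R / 2 * ((y - x) * Real.sqrt (y - x) * Real.sqrt (y - x)) / Real.sqrt (y - x) := by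
      rw [mul_assoc, Real.mul_self_sqrt hyx.le]
      gcongr
    _ = R / 2 * (y - x) ^ ((3:ℝ) / 2) := by
      rw [Real.sqrt_eq_rpow, ← Real.rpow_one_add' hyx.le (by norm_num)]
      field_simp
      norm_num

theorem statement_19 (x y R : ℝ) (hx : 0 ≤ x) (hxy : x < y) (hy : y ≤ 1) (hR : 0 < R)
    (f : ℝ → ℝ) (hconv : ConvexOn ℝ (Icc x y) f) (hint : IntegrableOn f (Icc x y))
    (hlip : ∀ u ∈ Icc x y, ∀ v ∈ Icc x y, u ≤ v → f v - f u ≤ R * (v - u)) :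
    sSup ((fun t => (t - x) / Real.sqrt (y - x) * (fbar f x y - fbar f x t)) '' Icc x y) ≤
      R / 2 * (y - x) ^ ((3:ℝ) / 2) :=
  statement_19_general x y R hxy hR f hlip

end
end
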